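/- Let 𝓗₂ ⊂ ℝ² be the lattice generated by (1,0) and (1/2,1/2). The set of points y ∈ ℝ² with inf_{x∈𝓗₂} ‖y − x‖₁ = 1/2 (the deep holes of 𝓗₂) is exactly the set {(t, ±(1/2 − t)) : 0 ≤ t ≤ 1/2} + 𝓗₂. -/

import Mathlib

/-!
In the coordinates `u = y₁ + y₂`, `v = y₁ - y₂` the ℓ¹-norm becomes the sup-norm
(`|a| + |b| = max |a + b| |a - b|`) and `H2` becomes `ℤ²`. Hence the distance to `H2` is the
larger of the distances of `u` and `v` to `ℤ`, and it equals `1/2` exactly when `u` or `v` is a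
half-integer. The lines `u ∈ ℤ + 1/2` and `v ∈ ℤ + 1/2` are the translates by `H2` of the
segments `(t, 1/2 - t)` and `(t, t - 1/2)`, `0 ≤ t ≤ 1/2`.
-/

/-- The planar lattice generated by `(1,0)` and `(1/2,1/2)`. -/
def H2 : Set (ℝ × ℝ) := {p | ∃ a b : ℤ, p = ((a : ℝ) + (b : ℝ)/2, (b : ℝ)/2)}

/-- ℓ¹-distance from `y` to the set `H2`. -/
noncomputable def distH2 (y : ℝ × ℝ) : ℝ :=
  sInf ((fun p => |y.1 - p.1| + |y.2 - p.2|) '' H2)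

theorem abs_sub_round_eq_half_iff {α : Type*} [Field α] [LinearOrder α] [IsStrictOrderedRing α]
    [FloorRing α] {x : α} :
    |x - round x| = 1 / 2 ↔ ∃ k : ℤ, x = k + 1 / 2 := by
  constructor
  · intro h
    rcases abs_eq (by norm_num : (0 : α) ≤ 1 / 2) |>.mp h with h | h
    · exact ⟨round x, by linear_combination h⟩
    · exact ⟨round x - 1, by push_cast; linear_combination h⟩
  · rintro ⟨k, rfl⟩
    have : round ((k : α) + 1 / 2) = k + 1 := by simp
    rw [this]
    norm_num [abs_of_neg]

theorem abs_add_abs_eq_max_abs_add_abs_sub {α : Type*} [AddCommGroup α] [LinearOrder α]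
    [IsOrderedAddMonoid α] (a b : α) : |a| + |b| = max |a + b| |a - b| := by
  refine le_antisymm ?_ (max_le (abs_add_le a b) (abs_sub a b))
  rcases abs_cases a with ⟨ha, -⟩ | ⟨ha, -⟩ <;>
    rcases abs_cases b with ⟨hb, -⟩ | ⟨hb, -⟩ <;> rw [ha, hb]
  · exact le_max_of_le_left (le_abs_self _)
  · exact le_max_of_le_right (by rw [← sub_eq_add_neg]; exact le_abs_self _)
  · exact le_max_of_le_right ((le_of_eq (by abel)).trans (neg_le_abs _))
  · exact le_max_of_le_left ((le_of_eq (by abel)).trans (neg_le_abs _))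

theorem mem_H2_iff {p : ℝ × ℝ} :
    p ∈ H2 ↔ ∃ m n : ℤ, p.1 + p.2 = m ∧ p.1 - p.2 = n := by
  constructor
  · rintro ⟨a, b, rfl⟩
    exact ⟨a + b, a, by push_cast; ring, by ring⟩
  · rintro ⟨m, n, hm, hn⟩
    refine ⟨n, m - n, Prod.ext ?_ ?_⟩ <;> push_cast <;> linarith

theorem abs_sub_add_abs_sub_eq_max (y p : ℝ × ℝ) :
    |y.1 - p.1| + |y.2 - p.2| =
      max |y.1 + y.2 - (p.1 + p.2)| |y.1 - y.2 - (p.1 - p.2)| := by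
  rw [abs_add_abs_eq_max_abs_add_abs_sub]
  ring_nf

theorem distH2_eq (y : ℝ × ℝ) :
    distH2 y = max |y.1 + y.2 - round (y.1 + y.2)| |y.1 - y.2 - round (y.1 - y.2)| := by
  set u := y.1 + y.2
  set v := y.1 - y.2
  have hmem : max |u - round u| |v - round v| ∈
      (fun p => |y.1 - p.1| + |y.2 - p.2|) '' H2 := by
    set p : ℝ × ℝ := ((round u + round v : ℝ) / 2, (round u - round v : ℝ) / 2)
    have hp₁ : p.1 + p.2 = round u := by simp only [p]; ring
    have hp₂ : p.1 - p.2 = round v := by simp only [p]; ring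
    refine ⟨p, mem_H2_iff.mpr ⟨_, _, hp₁, hp₂⟩, ?_⟩
    exact (abs_sub_add_abs_sub_eq_max y p).trans (by rw [hp₁, hp₂])
  refine le_antisymm (csInf_le ⟨0, ?_⟩ hmem) (le_csInf ⟨_, hmem⟩ ?_)
  · rintro r ⟨p, -, rfl⟩
    positivity
  · rintro r ⟨p, hp, rfl⟩
    obtain ⟨m, n, hm, hn⟩ := mem_H2_iff.mp hp
    simp only [abs_sub_add_abs_sub_eq_max, hm, hn]
    exact max_le_max (round_le u m) (round_le v n)

theorem exists_antidiag_add_H2_iff (y : ℝ × ℝ) :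
    (∃ t : ℝ, 0 ≤ t ∧ t ≤ 1 / 2 ∧ ∃ p ∈ H2, y = (t, 1 / 2 - t) + p) ↔
      ∃ k : ℤ, y.1 + y.2 = k + 1 / 2 := by
  constructor
  · rintro ⟨t, -, -, p, hp, rfl⟩
    obtain ⟨m, -, hm, -⟩ := mem_H2_iff.mp hp
    exact ⟨m, by simp only [Prod.fst_add, Prod.snd_add]; linarith⟩
  · rintro ⟨k, hk⟩
    set n := round (y.1 - y.2)
    have hn := abs_le.mp (abs_sub_round (y.1 - y.2))
    refine ⟨(y.1 - y.2 - n + 1 / 2) / 2, by linarith, by linarith, y - _,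
      mem_H2_iff.mpr ⟨k, n, ?_, ?_⟩, (add_sub_cancel _ _).symm⟩ <;>
    · simp only [Prod.fst_sub, Prod.snd_sub]
      linarith

theorem exists_diag_add_H2_iff (y : ℝ × ℝ) :
    (∃ t : ℝ, 0 ≤ t ∧ t ≤ 1 / 2 ∧ ∃ p ∈ H2, y = (t, t - 1 / 2) + p) ↔
      ∃ k : ℤ, y.1 - y.2 = k + 1 / 2 := by
  constructor
  · rintro ⟨t, -, -, p, hp, rfl⟩
    obtain ⟨-, n, -, hn⟩ := mem_H2_iff.mp hp
    exact ⟨n, by simp only [Prod.fst_add, Prod.snd_add]; linarith⟩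
  · rintro ⟨k, hk⟩
    set m := round (y.1 + y.2)
    have hm := abs_le.mp (abs_sub_round (y.1 + y.2))
    refine ⟨(y.1 + y.2 - m + 1 / 2) / 2, by linarith, by linarith, y - _,
      mem_H2_iff.mpr ⟨m, k, ?_, ?_⟩, (add_sub_cancel _ _).symm⟩ <;>
    · simp only [Prod.fst_sub, Prod.snd_sub]
      linarith

theorem stmt9 :
    {y : ℝ × ℝ | distH2 y = 1/2} =
      {y | ∃ t : ℝ, 0 ≤ t ∧ t ≤ 1/2 ∧ ∃ p ∈ H2,
        y = (t, 1/2 - t) + p ∨ y = (t, t - 1/2) + p} := by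
  ext y
  have hu := abs_sub_round (y.1 + y.2)
  have hv := abs_sub_round (y.1 - y.2)
  simp only [Set.mem_ofPred_eq, and_or_left, exists_or, exists_antidiag_add_H2_iff,
    exists_diag_add_H2_iff, distH2_eq, ← abs_sub_round_eq_half_iff, max_eq_iff]
  constructor
  · rintro (⟨h, -⟩ | ⟨h, -⟩)
    exacts [Or.inl h, Or.inr h]
  · rintro (h | h)
    exacts [Or.inl ⟨h, h ▸ hv⟩, Or.inr ⟨h, h ▸ hu⟩]
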